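/- (Joint Gaussianity of discretised Langevin displacements.) Consider the discrete Langevin process of the context with parameters γ, k, τ > 0. Then for every N ≥ 1 the random vector (ΔX₀, …, ΔX_{N-1}) in ℝᴺ has a Gaussian law with mean zero, and its covariance matrix S satisfies S_{ij} = 2kτ(1 - φ(γτ)) when i = j and S_{ij} = kγτ²φ(γτ)²·exp(-(|i-j|-1)γτ) when i ≠ j; in particular S is a symmetric Toeplitz matrix. -/

import Mathlib

open MeasureTheory ProbabilityTheory

/-- `φ(x) = (1 - exp(-x))/x`. -/
noncomputable def phi (x : ℝ) : ℝ := (1 - Real.exp (-x)) / x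

/-- The discrete Langevin process with parameters `γ, k, τ`: an initial velocity
`U₀ ~ N(0, kγ)`, together with an i.i.d. sequence `(ε_n)` of 2-dimensional Gaussian
random vectors `ε_n = (ε_n¹, ε_n²)` with mean zero and covariance matrix `C` given by
`C₁₁ = 2kτ(1 - 2φ(γτ) + φ(2γτ))`, `C₁₂ = C₂₁ = k(γτφ(γτ))²`, `C₂₂ = 2kγ²τφ(2γτ)`
(specified via the laws of all linear functionals), the whole sequence being
independent of `U₀`. -/
structure DiscreteLangevin {Ω : Type*} [MeasurableSpace Ω] (P : Measure Ω)
    (γ k τ : ℝ) where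
  U0 : Ω → ℝ
  ε : ℕ → Ω → ℝ × ℝ
  meas_U0 : Measurable U0
  meas_ε : ∀ n, Measurable (ε n)
  law_U0 : P.map U0 = gaussianReal 0 (k * γ).toNNReal
  law_ε : ∀ (n : ℕ) (a b : ℝ),
    P.map (fun ω => a * (ε n ω).1 + b * (ε n ω).2)
      = gaussianReal 0 (a ^ 2 * (2 * k * τ * (1 - 2 * phi (γ * τ) + phi (2 * γ * τ)))
          + 2 * a * b * (k * (γ * τ * phi (γ * τ)) ^ 2)
          + b ^ 2 * (2 * k * γ ^ 2 * τ * phi (2 * γ * τ))).toNNReal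
  indep_ε : iIndepFun ε P
  indep_U0 : IndepFun U0 (fun ω => fun n => ε n ω) P

/-- The velocities of the discrete Langevin process:
`U_{n+1} = exp(-γτ)·U_n + ε_n²`. -/
noncomputable def DiscreteLangevin.U {Ω : Type*} [MeasurableSpace Ω] {P : Measure Ω}
    {γ k τ : ℝ} (L : DiscreteLangevin P γ k τ) : ℕ → Ω → ℝ
  | 0 => L.U0
  | n + 1 => fun ω => Real.exp (-(γ * τ)) * L.U n ω + (L.ε n ω).2

/-- The displacements of the discrete Langevin process:
`ΔX_n = τφ(γτ)·U_n + ε_n¹`. -/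
noncomputable def DiscreteLangevin.ΔX {Ω : Type*} [MeasurableSpace Ω] {P : Measure Ω}
    {γ k τ : ℝ} (L : DiscreteLangevin P γ k τ) (n : ℕ) : Ω → ℝ :=
  fun ω => τ * phi (γ * τ) * L.U n ω + (L.ε n ω).1

/-!
Write `T_n(b) = ∑_{i<n} a_i ΔX_i + b U_n`. One step of the recursion gives
`T_{n+1}(b) = T_n(a_n τφ(γτ) + b e^{-γτ}) + (a_n ε_n¹ + b ε_n²)`, where the first summand is a
function of `U₀, ε₀, …, ε_{n-1}` and hence independent of `ε_n`. By induction on `n`, adding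
independent centred Gaussians, every `T_n(b)` is a centred Gaussian whose variance satisfies the
same recursion; its solution is an explicit quadratic form in `(a, b)` whose `a`-part is the
Toeplitz kernel `S`. Variances only add up if they are nonnegative, i.e. if `C` is positive
semidefinite, and `det C ≥ 0` amounts to `tanh (γτ/2) ≤ γτ/2`.
-/

open Real

theorem two_mul_one_sub_exp_neg_le {x : ℝ} (hx : 0 ≤ x) :
    2 * (1 - exp (-x)) ≤ x * (1 + exp (-x)) := by
  have hr0 : 0 < exp (-x) := exp_pos _
  have hr1 : exp (-x) ≤ 1 := exp_le_one_iff.2 (by linarith)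
  obtain ⟨y, hy⟩ : ∃ y, y = (1 - exp (-x)) / (1 + exp (-x)) := ⟨_, rfl⟩
  have hy0 : 0 ≤ y := hy ▸ div_nonneg (by linarith) (by linarith)
  have hy1 : |y| < 1 := by
    rw [abs_of_nonneg hy0, hy, div_lt_one (by linarith)]; linarith
  -- `y = tanh (x / 2)`, and `2 * y` is the first term of the series of `x = 2 * artanh y`
  have hlog : log (1 + y) - log (1 - y) = x := by
    rw [← log_div (by rw [hy]; positivity) (by linarith [le_abs_self y]), hy]
    field_simp
    rw [show 1 + exp (-x) + (1 - exp (-x)) = 2 * 1 by ring,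
      show 1 + exp (-x) - (1 - exp (-x)) = 2 * exp (-x) by ring,
      mul_div_mul_left _ _ two_ne_zero, one_div, log_inv, log_exp, neg_neg]
  have hle := le_hasSum (hasSum_log_sub_log_of_abs_lt_one hy1) 0 (fun k _ => by positivity)
  rw [hlog, hy] at hle
  norm_num at hle
  rwa [← mul_div_assoc, div_le_iff₀ (by positivity)] at hle

namespace ProbabilityTheory

variable {Ω α β δ : Type*} [MeasurableSpace Ω] [MeasurableSpace α] [MeasurableSpace β]
  [MeasurableSpace δ] {P : Measure Ω} {X : Ω → α} {Y : Ω → β} {Z : Ω → δ}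

theorem IndepFun.of_measurable_comap_left {X' : Ω → δ} (h : IndepFun X Y P)
    (hX' : Measurable[MeasurableSpace.comap X inferInstance] X') : IndepFun X' Y P := by
  rw [IndepFun_iff_Indep] at h ⊢
  exact indep_of_indep_of_le_left h hX'.comap_le

theorem IndepFun.prodMk_left_of_prodMk_right [IsFiniteMeasure P] (hX : Measurable X)
    (hY : Measurable Y) (hZ : Measurable Z) (hXYZ : IndepFun X (fun ω => (Y ω, Z ω)) P)
    (hYZ : IndepFun Y Z P) : IndepFun (fun ω => (X ω, Y ω)) Z P := by
  have hXY : IndepFun X Y P := hXYZ.comp measurable_id measurable_fst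
  rw [indepFun_iff_map_prod_eq_prod_map_map hX.aemeasurable hY.aemeasurable] at hXY
  rw [indepFun_iff_map_prod_eq_prod_map_map hY.aemeasurable hZ.aemeasurable] at hYZ
  rw [indepFun_iff_map_prod_eq_prod_map_map hX.aemeasurable (hY.prodMk hZ).aemeasurable]
    at hXYZ
  rw [indepFun_iff_map_prod_eq_prod_map_map (hX.prodMk hY).aemeasurable hZ.aemeasurable]
  apply MeasurableEquiv.prodAssoc.map_measurableEquiv_injective
  calc (P.map fun ω => ((X ω, Y ω), Z ω)).map MeasurableEquiv.prodAssoc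
      = P.map fun ω => (X ω, (Y ω, Z ω)) := by
        rw [Measure.map_map MeasurableEquiv.prodAssoc.measurable ((hX.prodMk hY).prodMk hZ)]
        rfl
    _ = (((P.map X).prod (P.map Y)).prod (P.map Z)).map MeasurableEquiv.prodAssoc := by
        rw [hXYZ, hYZ, Measure.prodAssoc_prod]
    _ = _ := by rw [hXY]

end ProbabilityTheory

lemma phi_two_mul (x : ℝ) : phi (2 * x) = (1 - exp (-x) ^ 2) / (2 * x) := by
  rw [phi, ← exp_nat_mul]
  push_cast
  ring_nf

namespace DiscreteLangevin

open Finset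

variable {Ω : Type*} [MeasurableSpace Ω] {P : Measure Ω} {γ k τ : ℝ}
  (L : DiscreteLangevin P γ k τ)

noncomputable def innovationVar (γ k τ p q : ℝ) : ℝ :=
  p ^ 2 * (2 * k * τ * (1 - 2 * phi (γ * τ) + phi (2 * γ * τ)))
    + 2 * p * q * (k * (γ * τ * phi (γ * τ)) ^ 2)
    + q ^ 2 * (2 * k * γ ^ 2 * τ * phi (2 * γ * τ))

theorem map_innovation (n : ℕ) (p q : ℝ) :
    P.map (fun ω => p * (L.ε n ω).1 + q * (L.ε n ω).2)
      = gaussianReal 0 (innovationVar γ k τ p q).toNNReal :=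
  L.law_ε n p q

theorem innovationVar_nonneg (hγ : 0 < γ) (hk : 0 < k) (hτ : 0 < τ) (p q : ℝ) :
    0 ≤ innovationVar γ k τ p q := by
  set A := 2 * k * τ * (1 - 2 * phi (γ * τ) + phi (2 * γ * τ))
  set B := k * (γ * τ * phi (γ * τ)) ^ 2
  set C := 2 * k * γ ^ 2 * τ * phi (2 * γ * τ)
  have hx : 0 < γ * τ := mul_pos hγ hτ
  have hr0 : 0 < exp (-(γ * τ)) := exp_pos _
  have hr1 : exp (-(γ * τ)) < 1 := exp_lt_one_iff.2 (by linarith)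
  have hφ2 : phi (2 * γ * τ) = (1 - exp (-(γ * τ)) ^ 2) / (2 * (γ * τ)) := by
    rw [mul_assoc, phi_two_mul]
  have hC : C = k * γ * (1 - exp (-(γ * τ)) ^ 2) := by
    simp only [C, hφ2]; field_simp
  have hdet : A * C - B ^ 2 = 2 * k ^ 2 * (1 - exp (-(γ * τ)))
      * (γ * τ * (1 + exp (-(γ * τ))) - 2 * (1 - exp (-(γ * τ)))) := by
    simp only [A, B, C]; rw [hφ2, phi]; field_simp; ring
  have hC_pos : 0 < C := by
    rw [hC]
    exact mul_pos (mul_pos hk hγ) (sub_pos.2 (pow_lt_one₀ hr0.le hr1 two_ne_zero))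
  have hdet_nonneg : 0 ≤ A * C - B ^ 2 := by
    rw [hdet]
    have htanh := two_mul_one_sub_exp_neg_le hx.le
    exact mul_nonneg (mul_nonneg (by positivity) (by linarith)) (by linarith)
  have hsq : C * innovationVar γ k τ p q = (B * p + C * q) ^ 2 + (A * C - B ^ 2) * p ^ 2 := by
    simp only [innovationVar]; ring
  refine nonneg_of_mul_nonneg_right ?_ hC_pos
  rw [hsq]
  positivity

/-- The covariance `Cov(ΔX_i, ΔX_j)` as a function of the lag `d = i - j`. -/
noncomputable def autocov (γ k τ : ℝ) (d : ℤ) : ℝ :=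
  if d = 0 then 2 * k * τ * (1 - phi (γ * τ))
  else k * γ * τ ^ 2 * phi (γ * τ) ^ 2 * exp (-(((d.natAbs : ℝ) - 1) * γ * τ))

theorem autocov_neg (d : ℤ) : autocov γ k τ (-d) = autocov γ k τ d := by
  simp only [autocov, neg_eq_zero, Int.natAbs_neg]

theorem autocov_natCast_sub {i n : ℕ} (h : i < n) :
    autocov γ k τ ((n : ℤ) - i)
      = k * γ * (τ * phi (γ * τ)) ^ 2 * exp (-(γ * τ)) ^ (n - 1 - i) := by
  have hlag : (((n : ℤ) - i).natAbs : ℝ) - 1 = ((n - 1 - i : ℕ) : ℝ) := by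
    rw [show ((n : ℤ) - i).natAbs = n - 1 - i + 1 by omega]
    push_cast; ring
  rw [autocov, if_neg (by omega), hlag, ← exp_nat_mul]
  ring_nf

/-- `Var(∑_{i<n} a_i ΔX_i + b U_n)`: besides the autocovariances of `ΔX`, it involves
`Cov(ΔX_i, U_n) = kγ τφ(γτ) e^{-(n-1-i)γτ}` for `i < n` and the stationary variance
`Var U_n = kγ`. -/
noncomputable def linCombVar (γ k τ : ℝ) (a : ℕ → ℝ) (n : ℕ) (b : ℝ) : ℝ :=
  ∑ i ∈ range n, ∑ j ∈ range n, a i * a j * autocov γ k τ (i - j)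
    + 2 * b * (k * γ * (τ * phi (γ * τ))) * ∑ i ∈ range n, a i * exp (-(γ * τ)) ^ (n - 1 - i)
    + b ^ 2 * (k * γ)

theorem linCombVar_succ (hγ : 0 < γ) (hτ : 0 < τ) (a : ℕ → ℝ) (n : ℕ) (b : ℝ) :
    linCombVar γ k τ a (n + 1) b
      = linCombVar γ k τ a n (a n * (τ * phi (γ * τ)) + b * exp (-(γ * τ)))
        + innovationVar γ k τ (a n) b := by
  set r := exp (-(γ * τ))
  set c := k * γ * (τ * phi (γ * τ)) ^ 2
  set A := ∑ i ∈ range n, a i * r ^ (n - 1 - i)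
  have hcross : ∑ i ∈ range n, a i * a n * autocov γ k τ (i - n) = a n * c * A := by
    rw [mul_sum]
    refine sum_congr rfl fun i hi => ?_
    rw [← autocov_neg, neg_sub, autocov_natCast_sub (mem_range.1 hi)]
    ring
  have hcross' : ∑ j ∈ range n, a n * a j * autocov γ k τ (n - j) = a n * c * A := by
    rw [mul_sum]
    refine sum_congr rfl fun j hj => ?_
    rw [autocov_natCast_sub (mem_range.1 hj)]
    ring
  have hA : ∑ i ∈ range (n + 1), a i * r ^ (n + 1 - 1 - i) = r * A + a n := by
    rw [sum_range_succ, mul_sum, Nat.add_sub_cancel, Nat.sub_self, pow_zero, mul_one]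
    congr 1
    refine sum_congr rfl fun i hi => ?_
    rw [show n - i = n - 1 - i + 1 by have := mem_range.1 hi; omega, pow_succ]
    ring
  have hdouble : ∑ i ∈ range (n + 1), ∑ j ∈ range (n + 1), a i * a j * autocov γ k τ (i - j)
      = ∑ i ∈ range n, ∑ j ∈ range n, a i * a j * autocov γ k τ (i - j)
        + 2 * (a n * c * A) + a n ^ 2 * (2 * k * τ * (1 - phi (γ * τ))) := by
    rw [sum_congr rfl fun i _ => sum_range_succ (fun j => a i * a j * autocov γ k τ (i - j)) n,
      sum_add_distrib, sum_range_succ (fun i => ∑ j ∈ range n, a i * a j * autocov γ k τ (i - j)),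
      sum_range_succ (fun i => a i * a n * autocov γ k τ (i - n)), hcross, hcross', sub_self,
      autocov, if_pos rfl]
    ring
  have hφ2 : phi (2 * γ * τ) = (1 - r ^ 2) / (2 * (γ * τ)) := by rw [mul_assoc, phi_two_mul]
  have hx : γ * τ ≠ 0 := by positivity
  rw [linCombVar, linCombVar, hdouble, hA, innovationVar, hφ2]
  simp only [c, phi]
  field_simp
  ring

theorem linCombVar_nonneg (hγ : 0 < γ) (hk : 0 < k) (hτ : 0 < τ) (a : ℕ → ℝ) (n : ℕ) (b : ℝ) :
    0 ≤ linCombVar γ k τ a n b := by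
  induction n generalizing b with
  | zero => simp only [linCombVar, range_zero, sum_empty, mul_zero, zero_add]; positivity
  | succ n ih =>
    rw [linCombVar_succ hγ hτ]
    exact add_nonneg (ih _) (innovationVar_nonneg hγ hk hτ _ _)

def past (n : ℕ) (ω : Ω) : ℝ × (range n → ℝ × ℝ) := (L.U0 ω, fun i => L.ε i ω)

theorem indepFun_past_ε [IsProbabilityMeasure P] (n : ℕ) : IndepFun (L.past n) (L.ε n) P := by
  have hε : IndepFun (fun ω (i : range n) => L.ε i ω)
      (fun ω (i : ({n} : Finset ℕ)) => L.ε i ω) P :=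
    L.indep_ε.indepFun_finset _ _ (by simp) L.meas_ε
  have hU0 : IndepFun L.U0 (fun ω => ((fun i : range n => L.ε i ω),
      (fun i : ({n} : Finset ℕ) => L.ε i ω))) P :=
    L.indep_U0.comp (φ := id)
      (ψ := fun e : ℕ → ℝ × ℝ => ((fun i : range n => e i), fun i : ({n} : Finset ℕ) => e i))
      measurable_id (by fun_prop)
  have hmeas (s : Finset ℕ) : Measurable fun ω (i : s) => L.ε i ω :=
    measurable_pi_iff.2 fun i => L.meas_ε i
  exact (hU0.prodMk_left_of_prodMk_right L.meas_U0 (hmeas _) (hmeas _) hε).comp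
    measurable_id (measurable_pi_apply ⟨n, mem_singleton_self n⟩)

theorem measurable_ε_comap_past {n j : ℕ} (h : j < n) :
    Measurable[MeasurableSpace.comap (L.past n) inferInstance] (L.ε j) :=
  (measurable_pi_apply (⟨j, mem_range.2 h⟩ : range n)).comp
    (measurable_snd.comp (comap_measurable (L.past n)))

theorem measurable_U_comap_past {n j : ℕ} (h : j ≤ n) :
    Measurable[MeasurableSpace.comap (L.past n) inferInstance] (L.U j) := by
  induction j with
  | zero => exact measurable_fst.comp (comap_measurable _)
  | succ j ih =>
    exact ((ih (by omega)).const_mul _).add (measurable_snd.comp (L.measurable_ε_comap_past h))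

noncomputable def linComb (a : ℕ → ℝ) (n : ℕ) (b : ℝ) (ω : Ω) : ℝ :=
  ∑ i ∈ range n, a i * L.ΔX i ω + b * L.U n ω

theorem measurable_linComb_comap_past (a : ℕ → ℝ) (n : ℕ) (b : ℝ) :
    Measurable[MeasurableSpace.comap (L.past n) inferInstance] (L.linComb a n b) := by
  refine (Finset.measurable_sum _ fun i hi => ?_).add
    ((L.measurable_U_comap_past le_rfl).const_mul b)
  have hi := mem_range.1 hi
  exact (((L.measurable_U_comap_past hi.le).const_mul _).add
    (measurable_fst.comp (L.measurable_ε_comap_past hi))).const_mul _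

theorem linComb_succ (a : ℕ → ℝ) (n : ℕ) (b : ℝ) :
    L.linComb a (n + 1) b = L.linComb a n (a n * (τ * phi (γ * τ)) + b * exp (-(γ * τ)))
      + fun ω => a n * (L.ε n ω).1 + b * (L.ε n ω).2 := by
  funext ω
  simp only [linComb, sum_range_succ, ΔX, U, Pi.add_apply]
  ring

theorem map_linComb [IsProbabilityMeasure P] (hγ : 0 < γ) (hk : 0 < k) (hτ : 0 < τ)
    (a : ℕ → ℝ) (n : ℕ) (b : ℝ) :
    P.map (L.linComb a n b) = gaussianReal 0 (linCombVar γ k τ a n b).toNNReal := by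
  induction n generalizing b with
  | zero =>
    have h : L.linComb a 0 b = (b * ·) ∘ L.U0 := by
      funext ω; simp [linComb, U]
    rw [h, ← Measure.map_map (measurable_const_mul b) L.meas_U0, L.law_U0,
      gaussianReal_map_const_mul, mul_zero]
    have hvar : linCombVar γ k τ a 0 b = b ^ 2 * (k * γ) := by simp [linCombVar]
    rw [hvar, Real.toNNReal_mul (sq_nonneg b), Real.toNNReal_of_nonneg (sq_nonneg b)]
  | succ n ih =>
    have hindep : IndepFun (L.linComb a n (a n * (τ * phi (γ * τ)) + b * exp (-(γ * τ))))
        (fun ω => a n * (L.ε n ω).1 + b * (L.ε n ω).2) P :=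
      ((L.indepFun_past_ε n).of_measurable_comap_left
        (L.measurable_linComb_comap_past a n _)).comp measurable_id
        (by fun_prop : Measurable fun x : ℝ × ℝ => a n * x.1 + b * x.2)
    rw [linComb_succ,
      gaussianReal_add_gaussianReal_of_indepFun hindep (ih _) (L.map_innovation n (a n) b),
      linCombVar_succ hγ hτ, Real.toNNReal_add (linCombVar_nonneg hγ hk hτ a n _)
        (innovationVar_nonneg hγ hk hτ _ _), add_zero]

end DiscreteLangevin

theorem langevin_displacements_joint_gaussian_general {Ω : Type*} [MeasurableSpace Ω]
    (P : Measure Ω) [IsProbabilityMeasure P]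
    (γ k τ : ℝ) (hγ : 0 < γ) (hk : 0 < k) (hτ : 0 < τ)
    (L : DiscreteLangevin P γ k τ)
    (N : ℕ)
    (S : Matrix (Fin N) (Fin N) ℝ)
    (hS : ∀ i j : Fin N, S i j =
      if i = j then 2 * k * τ * (1 - phi (γ * τ))
      else k * γ * τ ^ 2 * phi (γ * τ) ^ 2
        * Real.exp (-(((((i : ℤ) - (j : ℤ)).natAbs : ℝ) - 1) * γ * τ))) :
    (∀ a : Fin N → ℝ,
      P.map (fun ω => ∑ i : Fin N, a i * L.ΔX i ω)
        = gaussianReal 0 (∑ i : Fin N, ∑ j : Fin N, a i * a j * S i j).toNNReal)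
    ∧ S.IsSymm
    ∧ ∀ i j i' j' : Fin N, (i : ℤ) - (j : ℤ) = (i' : ℤ) - (j' : ℤ) → S i j = S i' j' := by
  have hS' (i j : Fin N) : S i j = DiscreteLangevin.autocov γ k τ (i - j) := by
    simp only [hS, DiscreteLangevin.autocov, sub_eq_zero, Nat.cast_inj, Fin.val_inj]
  refine ⟨fun a => ?_, Matrix.IsSymm.ext fun i j => ?_, fun i j i' j' h => by rw [hS', hS', h]⟩
  · set a' : ℕ → ℝ := fun i => if h : i < N then a ⟨i, h⟩ else 0
    have ha' (i : Fin N) : a' i = a i := dif_pos i.isLt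
    have hfun : (fun ω => ∑ i : Fin N, a i * L.ΔX i ω) = L.linComb a' N 0 := by
      funext ω
      simp only [DiscreteLangevin.linComb, zero_mul, add_zero,
        ← Fin.sum_univ_eq_sum_range (fun i => a' i * L.ΔX i ω), ha']
    have hvar : DiscreteLangevin.linCombVar γ k τ a' N 0
        = ∑ i : Fin N, ∑ j : Fin N, a i * a j * S i j := by
      simp only [DiscreteLangevin.linCombVar, ← Fin.sum_univ_eq_sum_range, ha', hS']
      ring
    rw [hfun, L.map_linComb hγ hk hτ, hvar]
  · rw [hS', hS', ← DiscreteLangevin.autocov_neg, neg_sub]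

/-- Joint Gaussianity of discretised Langevin displacements: for every `N ≥ 1` the random
vector `(ΔX₀, …, ΔX_{N-1})` has a mean-zero Gaussian law (every linear functional of it is
a mean-zero Gaussian) with covariance matrix `S` given by `S_ij = 2kτ(1 - φ(γτ))` when
`i = j` and `S_ij = kγτ²φ(γτ)²e^{-(|i-j|-1)γτ}` when `i ≠ j`; in particular `S` is a
symmetric Toeplitz matrix. -/
theorem langevin_displacements_joint_gaussian {Ω : Type*} [MeasurableSpace Ω]
    (P : Measure Ω) [IsProbabilityMeasure P]
    (γ k τ : ℝ) (hγ : 0 < γ) (hk : 0 < k) (hτ : 0 < τ)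
    (L : DiscreteLangevin P γ k τ)
    (N : ℕ) (hN : 1 ≤ N)
    (S : Matrix (Fin N) (Fin N) ℝ)
    (hS : ∀ i j : Fin N, S i j =
      if i = j then 2 * k * τ * (1 - phi (γ * τ))
      else k * γ * τ ^ 2 * phi (γ * τ) ^ 2
        * Real.exp (-(((((i : ℤ) - (j : ℤ)).natAbs : ℝ) - 1) * γ * τ))) :
    (∀ a : Fin N → ℝ,
      P.map (fun ω => ∑ i : Fin N, a i * L.ΔX i ω)
        = gaussianReal 0 (∑ i : Fin N, ∑ j : Fin N, a i * a j * S i j).toNNReal)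
    ∧ S.IsSymm
    ∧ ∀ i j i' j' : Fin N, (i : ℤ) - (j : ℤ) = (i' : ℤ) - (j' : ℤ) → S i j = S i' j' :=
  langevin_displacements_joint_gaussian_general P γ k τ hγ hk hτ L N S hS
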